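/- Let d ≥ 2 and a, c > 0, set δ = a/(3cd), and define p : ℝ^d → ℝ by p(x) = (a/3)∑_{j=1}^{d−1} h_j(x) − (a/3)⟨e_1, x⟩ + c·h_δ(x). Then x* = (a/(3cd))·1_d (the vector with all coordinates equal to a/(3cd)) is a minimizer of p with p(x*) = −a²/(18cd), and every x ∈ ℝ^d with ⟨e_d, x⟩ = 0 satisfies p(x) ≥ 0; consequently p(x) − p(x*) ≥ a²/(18cd) for every x with ⟨e_d, x⟩ = 0. -/

import Mathlib

open scoped BigOperators RealInnerProductSpace

noncomputable section

/-- The `k`-th standard basis vector of `ℝ^d`, `0`-indexed (so the paper's `e_k` is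
`stdBasis d (k-1)`); out-of-range indices give `0`. -/
def stdBasis (d j : ℕ) : EuclideanSpace ℝ (Fin d) :=
  if h : j < d then EuclideanSpace.single ⟨j, h⟩ 1 else 0

/-- Scalar Huber function. -/
def huber1 (δ t : ℝ) : ℝ := if |t| ≤ δ then t ^ 2 / 2 else δ * |t| - δ ^ 2 / 2

/-- Huber function on `ℝ^d`: `h_δ(x) = ∑_{j=1}^d h_δ^j(⟨e_j, x⟩)`. -/
def huber (d : ℕ) (δ : ℝ) (x : EuclideanSpace ℝ (Fin d)) : ℝ :=
  ∑ j ∈ Finset.range d, huber1 δ ⟪stdBasis d j, x⟫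

/-!
Writing `y j = ⟪e_j, x⟫`, the objective is `μ·TV(y) - μ·y₀ + c·∑ h_δ(y j)` with `μ = a/3 = c δ d`.
Every `|y j|` is at least `|y₀| - TV(y)`, and the Huber function lies above its tangent
`δ|t| - δ²/2`; together these bound the objective below by `-c d δ²/2 = -a²/(18cd)`, which the
constant vector `δ·1` attains. If `y_{d-1} = 0` then telescoping gives `y₀ ≤ TV(y)`, so the
objective is nonnegative.
-/

open Finset

lemma huber1_nonneg {δ : ℝ} (hδ : 0 ≤ δ) (t : ℝ) : 0 ≤ huber1 δ t := by
  unfold huber1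
  split_ifs with h
  · positivity
  · nlinarith [not_le.mp h]

lemma mul_abs_sub_le_huber1 (δ t : ℝ) : δ * |t| - δ ^ 2 / 2 ≤ huber1 δ t := by
  unfold huber1
  split_ifs
  · nlinarith [sq_abs t, sq_nonneg (|t| - δ)]
  · exact le_rfl

lemma huber1_self {δ : ℝ} (hδ : 0 ≤ δ) : huber1 δ δ = δ ^ 2 / 2 := by
  rw [huber1, if_pos (abs_of_nonneg hδ).le]

def variation (d : ℕ) (y : ℕ → ℝ) : ℝ := ∑ i ∈ Icc 1 (d - 1), |y i - y (i - 1)|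

lemma variation_mono (y : ℕ → ℝ) {m n : ℕ} (hmn : m ≤ n) : variation m y ≤ variation n y :=
  sum_le_sum_of_subset_of_nonneg (Icc_subset_Icc_right (by omega)) fun _ _ _ => abs_nonneg _

lemma variation_eq_zero_of_forall_eq {d : ℕ} {y : ℕ → ℝ} {t : ℝ} (hy : ∀ j < d, y j = t) :
    variation d y = 0 :=
  sum_eq_zero fun j hj => by
    rw [mem_Icc] at hj
    rw [hy j (by omega), hy (j - 1) (by omega), sub_self, abs_zero]

lemma abs_le_variation_add_abs (y : ℕ → ℝ) (j : ℕ) : |y 0| ≤ variation (j + 1) y + |y j| := by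
  induction j with
  | zero => simp [variation]
  | succ n ih =>
    have hstep := abs_sub_abs_le_abs_sub (y n) (y (n + 1))
    rw [abs_sub_comm] at hstep
    have hvar : variation (n + 2) y = variation (n + 1) y + |y (n + 1) - y n| := by
      simp only [variation, Nat.add_sub_cancel, show n + 2 - 1 = n + 1 by omega]
      rw [sum_Icc_succ_top (by omega), Nat.add_sub_cancel]
    linarith

lemma abs_sub_variation_le_abs (y : ℕ → ℝ) {d j : ℕ} (hj : j < d) :
    |y 0| - variation d y ≤ |y j| := by
  linarith [abs_le_variation_add_abs y j, variation_mono y (show j + 1 ≤ d by omega)]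

def chainObjective (d : ℕ) (μ c δ : ℝ) (y : ℕ → ℝ) : ℝ :=
  μ * variation d y - μ * y 0 + c * ∑ j ∈ range d, huber1 δ (y j)

lemma chainObjective_of_forall_eq {d : ℕ} {μ c δ : ℝ} (hδ : 0 ≤ δ) {y : ℕ → ℝ}
    (hy : ∀ j < d, y j = δ) (hd : 0 < d) :
    chainObjective d μ c δ y = c * d * δ ^ 2 / 2 - μ * δ := by
  rw [chainObjective, variation_eq_zero_of_forall_eq hy, hy 0 hd,
    sum_congr rfl fun j hj => by rw [hy j (mem_range.mp hj), huber1_self hδ]]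
  simp only [sum_const, card_range, nsmul_eq_mul]
  ring

lemma neg_le_chainObjective {d : ℕ} {c δ : ℝ} (hc : 0 ≤ c) (hδ : 0 ≤ δ) (y : ℕ → ℝ) :
    -(c * d * δ ^ 2 / 2) ≤ chainObjective d (c * δ * d) c δ y := by
  have habs : d * (|y 0| - variation d y) ≤ ∑ j ∈ range d, |y j| := by
    simpa [mul_sub] using
      sum_le_sum fun j (hj : j ∈ range d) => abs_sub_variation_le_abs y (mem_range.mp hj)
  have hhuber : δ * ∑ j ∈ range d, |y j| - d * (δ ^ 2 / 2) ≤ ∑ j ∈ range d, huber1 δ (y j) := by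
    simpa [sum_sub_distrib, mul_sum] using
      sum_le_sum fun j (_ : j ∈ range d) => mul_abs_sub_le_huber1 δ (y j)
  have h1 := mul_le_mul_of_nonneg_left hhuber hc
  have h2 := mul_le_mul_of_nonneg_left habs (mul_nonneg hc hδ)
  have h3 := mul_le_mul_of_nonneg_left (le_abs_self (y 0))
    (mul_nonneg (mul_nonneg hc hδ) d.cast_nonneg)
  unfold chainObjective
  linarith

lemma chainObjective_nonneg {d : ℕ} {μ c δ : ℝ} (hμ : 0 ≤ μ) (hc : 0 ≤ c) (hδ : 0 ≤ δ)
    {y : ℕ → ℝ} (hd : 0 < d) (hy : y (d - 1) = 0) : 0 ≤ chainObjective d μ c δ y := by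
  have hy0 : y 0 ≤ variation d y := by
    have := abs_sub_variation_le_abs y (show d - 1 < d by omega)
    rw [hy, abs_zero] at this
    linarith [le_abs_self (y 0)]
  have hH : 0 ≤ ∑ j ∈ range d, huber1 δ (y j) := sum_nonneg fun _ _ => huber1_nonneg hδ _
  have hμV := mul_nonneg hμ (sub_nonneg.mpr hy0)
  unfold chainObjective
  linarith [mul_nonneg hc hH]

lemma inner_stdBasis {d j : ℕ} (hj : j < d) (x : EuclideanSpace ℝ (Fin d)) :
    ⟪stdBasis d j, x⟫ = x ⟨j, hj⟩ := by
  simp [stdBasis, dif_pos hj, EuclideanSpace.inner_single_left]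

theorem stmt3 (d : ℕ) (hd : 2 ≤ d) (a c : ℝ) (ha : 0 < a) (hc : 0 < c)
    (δ : ℝ) (hδ : δ = a / (3 * c * d))
    (p : EuclideanSpace ℝ (Fin d) → ℝ)
    (hp : ∀ x, p x =
      (a / 3) * ∑ j ∈ Finset.Icc 1 (d - 1), |⟪stdBasis d j - stdBasis d (j - 1), x⟫|
        - (a / 3) * ⟪stdBasis d 0, x⟫ + c * huber d δ x)
    (xstar : EuclideanSpace ℝ (Fin d))
    (hxstar : xstar = (WithLp.equiv 2 (Fin d → ℝ)).symm fun _ => a / (3 * c * d)) :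
    (∀ x, p xstar ≤ p x) ∧
    p xstar = -(a ^ 2 / (18 * c * d)) ∧
    (∀ x, ⟪stdBasis d (d - 1), x⟫ = 0 → 0 ≤ p x) ∧
    (∀ x, ⟪stdBasis d (d - 1), x⟫ = 0 → a ^ 2 / (18 * c * d) ≤ p x - p xstar) := by
  have hd0 : 0 < d := by omega
  have hδ0 : 0 ≤ δ := by rw [hδ]; positivity
  have hμ : a / 3 = c * δ * d := by rw [hδ]; field_simp
  have hmin : c * d * δ ^ 2 / 2 = a ^ 2 / (18 * c * d) := by rw [hδ]; field_simp; ring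
  have hpy : ∀ x, p x = chainObjective d (c * δ * d) c δ (fun j => ⟪stdBasis d j, x⟫) := by
    intro x
    rw [hp, ← hμ]
    simp only [inner_sub_left]
    rfl
  have hstar : p xstar = -(a ^ 2 / (18 * c * d)) := by
    have hcoord : ∀ j < d, ⟪stdBasis d j, xstar⟫ = δ := fun j hj => by
      rw [inner_stdBasis hj, hxstar, hδ]; simp
    rw [hpy, chainObjective_of_forall_eq hδ0 hcoord hd0, ← hmin]
    ring
  have hzero : ∀ x, ⟪stdBasis d (d - 1), x⟫ = 0 → 0 ≤ p x := fun x hx => by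
    rw [hpy]; exact chainObjective_nonneg (by positivity) hc.le hδ0 hd0 hx
  refine ⟨fun x => ?_, hstar, hzero, fun x hx => by linarith [hzero x hx]⟩
  rw [hstar, hpy, ← hmin]
  exact neg_le_chainObjective hc.le hδ0 _

end
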